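/- arXiv:2401.01716 — 6 statements merged into one kernel-verified Lean document; each statement's English description precedes it below -/
import Mathlib

section
/- Let G be a finite graph, let W = {W_1, …, W_ℓ} be a partition of V(G), and fix an orientation of the edges of G whose endpoints lie in different classes of W. For each vertex v define d̂(v) as the number of distinct classes W_j containing the tail of some arc with head v. Then for every connected subgraph H of G, if p is the number of classes of W intersected by V(H), then Σ_{v ∈ V(H)} d̂(v) ≥ p − 1. -/
/-!
Contract every class of `W` met by `H` to a single vertex. Since `H` is connected, so is the
resulting graph on these `p` classes, hence it has at least `p - 1` edges. Each such edge `{i, j}`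
comes from an arc `u → v` inside `H` between `W_i` and `W_j`, and the pair `(v, class of u)` is
counted by `d̂(v)`; it determines the edge, so distinct edges give distinct pairs.
-/

variable {V : Type*}

open Finset

namespace SimpleGraph

variable {β : Type*}

theorem Preconnected.of_surjective_of_adj {G : SimpleGraph V} {Q : SimpleGraph β}
    (hG : G.Preconnected) (f : V → β) (hf : Function.Surjective f)
    (hadj : ∀ u v, G.Adj u v → f u ≠ f v → Q.Adj (f u) (f v)) : Q.Preconnected := by
  intro a b
  obtain ⟨u, rfl⟩ := hf a
  obtain ⟨v, rfl⟩ := hf b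
  rw [reachable_iff_reflTransGen]
  refine ((reachable_iff_reflTransGen u v).mp (hG u v)).lift' f fun x y hxy => ?_
  by_cases hxy' : f x = f y
  · show Relation.ReflTransGen Q.Adj (f x) (f y)
    rw [hxy']
  · exact .single (hadj x y hxy hxy')

theorem Connected.card_image_le_card_add_one [Fintype V] [DecidableEq β] {G : SimpleGraph V}
    (hG : G.Connected) (c : V → β) (s : Finset (Sym2 β))
    (hs : ∀ u v, G.Adj u v → c u ≠ c v → s(c u, c v) ∈ s) :
    #(univ.image c) ≤ #s + 1 := by
  let Q : SimpleGraph (univ.image c) := fromEdgeSet (Sym2.map Subtype.val ⁻¹' s)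
  let f : V → univ.image c := fun v => ⟨c v, mem_image_of_mem c (mem_univ v)⟩
  have hf : Function.Surjective f := by
    rintro ⟨b, hb⟩
    obtain ⟨v, -, rfl⟩ := mem_image.mp hb
    exact ⟨v, rfl⟩
  have hQ : Q.Connected := by
    obtain ⟨v₀⟩ := hG.nonempty
    have : Nonempty (univ.image c) := ⟨f v₀⟩
    refine ⟨hG.preconnected.of_surjective_of_adj f hf fun u v huv hne => ?_⟩
    exact (fromEdgeSet_adj _).mpr ⟨hs u v huv fun h => hne (Subtype.ext h), hne⟩
  have hedges : Nat.card Q.edgeSet ≤ #s := by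
    rw [← Nat.card_eq_finsetCard]
    refine Nat.card_le_card_of_injective (fun e => ⟨Sym2.map Subtype.val e.1, ?_⟩) ?_
    · have he : e.1 ∈ Sym2.map Subtype.val ⁻¹' (s : Set (Sym2 β)) \ Sym2.diagSet := by
        rw [← edgeSet_fromEdgeSet]
        exact e.2
      exact he.1
    · intro e e' h
      exact Subtype.ext (Sym2.map.injective Subtype.val_injective (congrArg Subtype.val h))
  have hvert := hQ.card_vert_le_card_edgeSet_add_one
  rw [Nat.card_eq_fintype_card, Fintype.card_coe] at hvert
  omega

end SimpleGraph

theorem natCard_classes_meeting_eq_card_image [Fintype V] {ι : Type*} [Fintype ι]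
    [DecidableEq ι] {W : ι → Set V} {cls : V → ι} (hW : ∀ v i, v ∈ W i ↔ cls v = i)
    (H : Finset V) :
    Nat.card {i : ι // ∃ v ∈ H, v ∈ W i} = #(univ.image fun v : (H : Set V) => cls v) := by
  classical
  rw [Nat.card_eq_fintype_card, Fintype.card_subtype]
  congr 1
  ext i
  simp only [mem_filter, mem_univ, true_and, mem_image, Subtype.exists, mem_coe, exists_prop, hW]

theorem stmt2_general [Fintype V] (G : SimpleGraph V) (ℓ : ℕ) (W : Fin ℓ → Set V)
    (hpart : ∀ v : V, ∃! i, v ∈ W i)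
    (A : V → V → Prop)
    (horient : ∀ u v : V,
      (A u v ∨ A v u) ↔ (G.Adj u v ∧ ∀ i, ¬ (u ∈ W i ∧ v ∈ W i)))
    (dhat : V → ℕ)
    (hdhat : ∀ v, dhat v = Nat.card {i : Fin ℓ // ∃ u ∈ W i, A u v})
    (H : Finset V) (hconn : (G.induce (↑H : Set V)).Connected)
    (p : ℕ) (hp : p = Nat.card {i : Fin ℓ // ∃ v ∈ H, v ∈ W i}) :
    (p : ℤ) - 1 ≤ ∑ v ∈ H, (dhat v : ℤ) := by
  classical
  choose cls hcls hcls_unique using hpart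
  have hW : ∀ v i, v ∈ W i ↔ cls v = i := fun v i =>
    ⟨fun h => (hcls_unique v i h).symm, (· ▸ hcls v)⟩
  set T := H.sigma fun v => univ.filter fun i => ∃ u ∈ W i, A u v
  have hT : #T = ∑ v ∈ H, dhat v := by
    rw [card_sigma]
    refine sum_congr rfl fun v _ => ?_
    rw [hdhat, Nat.card_eq_fintype_card, Fintype.card_subtype]
  have hcross : ∀ u v : (H : Set V), (G.induce (H : Set V)).Adj u v → cls u ≠ cls v →
      s(cls u, cls v) ∈ T.image fun x => s(x.2, cls x.1) := by
    intro u v huv hne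
    have harc : A u v ∨ A v u := (horient u v).mpr
      ⟨huv, fun i ⟨hu, hv⟩ => hne (((hW u i).mp hu).trans ((hW v i).mp hv).symm)⟩
    rcases harc with h | h
    · refine mem_image.mpr ⟨⟨v, cls u⟩, ?_, rfl⟩
      exact mem_sigma.mpr ⟨v.2, mem_filter.mpr ⟨mem_univ _, u, hcls u, h⟩⟩
    · refine mem_image.mpr ⟨⟨u, cls v⟩, ?_, Sym2.eq_swap⟩
      exact mem_sigma.mpr ⟨u.2, mem_filter.mpr ⟨mem_univ _, v, hcls v, h⟩⟩
  have hbound := hconn.card_image_le_card_add_one _ _ hcross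
  have hT_image := card_image_le (s := T) (f := fun x => s(x.2, cls x.1))
  rw [natCard_classes_meeting_eq_card_image hW] at hp
  zify at hT hp hbound hT_image
  rw [← hT, hp]
  omega

theorem stmt2 [Fintype V] (G : SimpleGraph V) (ℓ : ℕ) (W : Fin ℓ → Set V)
    (hpart : ∀ v : V, ∃! i, v ∈ W i)
    (A : V → V → Prop)
    (horient : ∀ u v : V,
      (A u v ∨ A v u) ↔ (G.Adj u v ∧ ∀ i, ¬ (u ∈ W i ∧ v ∈ W i)))
    (hasym : ∀ u v, A u v → ¬ A v u)
    (dhat : V → ℕ)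
    (hdhat : ∀ v, dhat v = Nat.card {i : Fin ℓ // ∃ u ∈ W i, A u v})
    (H : Finset V) (hconn : (G.induce (↑H : Set V)).Connected)
    (p : ℕ) (hp : p = Nat.card {i : Fin ℓ // ∃ v ∈ H, v ∈ W i}) :
    (p : ℤ) - 1 ≤ ∑ v ∈ H, (dhat v : ℤ) :=
  stmt2_general G ℓ W hpart A horient dhat hdhat H hconn p hp
end

section
/- Let G be a finite graph, S ⊆ V(G) with |S| = ℓ, and W an ℓ-partition of V(G) such that each class of W contains exactly one vertex of S. Fix an orientation of the edges crossing between classes of W and define d̂(v) accordingly. Then for every connected subgraph H of G, |S ∩ V(H)| − Σ_{v ∈ V(H)} d̂(v) ≤ 1. Consequently, the generalized connectivity inequality Σ_{u ∈ S}(1 − d̂(u)) x_{u,c} − Σ_{v ∉ S} d̂(v) x_{v,c} ≤ 1 is valid for the incidence vector of any connected k-subpartition of G and any class c. -/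
open scoped Classical

variable {V : Type*}

/-- A connected `k`-subpartition of `G`: `k` pairwise disjoint vertex sets,
each either empty or inducing a connected subgraph. -/
def ConnKSub (G : SimpleGraph V) (k : ℕ) (P : Fin k → Set V) : Prop :=
  (∀ i j, i ≠ j → Disjoint (P i) (P j)) ∧
    ∀ i, P i = ∅ ∨ (G.induce (P i)).Connected

/-!
Collapse every class of `W` to a point. A connected `H` becomes a connected quotient graph on the
set `J` of classes that `H` meets, so the quotient has at least `|J| - 1` edges. Each quotient edge
is realised by a crossing edge inside `H`, whose orientation gives an arc with head `v ∈ H` and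
tail class `i`, i.e. a class counted in `d̂(v)`; the pair `(v, i)` determines the quotient edge
`{class of v, i}`. Hence `Σ_{v ∈ H} d̂(v) ≥ |J| - 1 ≥ |S ∩ H| - 1`, since each class holds at most
one vertex of `S`. The inequality for a class `P c` of a connected subpartition is the case
`H = P c`, rewritten.
-/

open Finset Function

namespace SimpleGraph

variable {W : Type*} {G : SimpleGraph V}

theorem Reachable.map_fun (f : V → W) {u v : V} (h : G.Reachable u v) :
    (G.map f).Reachable (f u) (f v) := by
  obtain ⟨p⟩ := h
  induction p with
  | nil => rfl
  | @cons x y _ hxy _ ih =>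
    refine Reachable.trans ?_ ih
    by_cases hf : f x = f y
    · rw [hf]
    · exact (map_adj_apply' hxy hf).reachable

theorem Connected.map_of_surjective {f : V → W} (hf : Surjective f) (hG : G.Connected) :
    (G.map f).Connected :=
  have := hG.nonempty.map f
  ⟨hf.forall₂.2 fun u v => (hG u v).map_fun f⟩

theorem Connected.card_range_le_card_edgeSet_map_add_one (hG : G.Connected) (f : V → W) :
    Nat.card (Set.range f) ≤ Nat.card (G.map f).edgeSet + 1 := by
  set Q := G.map (Set.rangeFactorization f)
  have hQ : Q.map (Embedding.subtype _) = G.map f := by rw [map_map]; rfl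
  calc Nat.card (Set.range f) ≤ Nat.card Q.edgeSet + 1 :=
        (hG.map_of_surjective Set.rangeFactorization_surjective).card_vert_le_card_edgeSet_add_one
    _ = Nat.card (G.map f).edgeSet + 1 := by
      rw [← hQ, edgeSet_map, Nat.card_image_of_injective (Embedding.sym2Map _).injective]

end SimpleGraph

section Orientation

variable {ι : Type*} [Fintype ι]

/-- With the partition encoded by its class map `cls`, `#(tailClasses cls A v)` is `d̂(v)`. -/
noncomputable def tailClasses (cls : V → ι) (A : V → V → Prop) (v : V) : Finset ι :=
  {i | ∃ u, cls u = i ∧ A u v}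

variable [DecidableEq ι] {G : SimpleGraph V} {cls : V → ι} {A : V → V → Prop}

theorem card_image_le_sum_card_tailClasses_add_one
    (hA : ∀ u v, G.Adj u v → cls u ≠ cls v → A u v ∨ A v u)
    {H : Finset V} (hH : (G.induce (H : Set V)).Connected) :
    #(H.image cls) ≤ ∑ v ∈ H, #(tailClasses cls A v) + 1 := by
  set f : ↥(H : Set V) → ι := fun x => cls x
  have hrange : Set.range f = H.image cls := by ext; simp [f]
  have hedges : ((G.induce (H : Set V)).map f).edgeSet ⊆
      (H.sigma (tailClasses cls A)).image fun p => s(cls p.1, p.2) := by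
    intro e he
    induction e using Sym2.ind with | _ a b => ?_
    obtain ⟨hab, x, y, hxy, rfl, rfl⟩ := he
    simp only [coe_image, coe_sigma, Set.mem_image, Set.mem_sigma_iff, mem_coe]
    rcases hA x y hxy hab with hxy' | hyx'
    · exact ⟨⟨y, cls x⟩, ⟨y.2, mem_filter.2 ⟨mem_univ _, x, rfl, hxy'⟩⟩, Sym2.eq_swap⟩
    · exact ⟨⟨x, cls y⟩, ⟨x.2, mem_filter.2 ⟨mem_univ _, y, rfl, hyx'⟩⟩, rfl⟩
  calc #(H.image cls) = Nat.card (Set.range f) := by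
        rw [hrange, Nat.card_coe_set_eq, Set.ncard_coe_finset]
    _ ≤ Nat.card ((G.induce (H : Set V)).map f).edgeSet + 1 :=
      hH.card_range_le_card_edgeSet_map_add_one f
    _ ≤ #((H.sigma (tailClasses cls A)).image fun p => s(cls p.1, p.2)) + 1 := by
      rw [← Set.ncard_coe_finset, ← Nat.card_coe_set_eq]
      exact Nat.add_le_add_right (Nat.card_mono (Finset.finite_toSet _) hedges) 1
    _ ≤ ∑ v ∈ H, #(tailClasses cls A v) + 1 := by
      rw [← card_sigma]; exact Nat.add_le_add_right card_image_le 1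

theorem card_inter_le_sum_card_tailClasses_add_one [DecidableEq V]
    (hA : ∀ u v, G.Adj u v → cls u ≠ cls v → A u v ∨ A v u)
    {S : Finset V} (hS : Set.InjOn cls S)
    {H : Finset V} (hH : (G.induce (H : Set V)).Connected) :
    #(S ∩ H) ≤ ∑ v ∈ H, #(tailClasses cls A v) + 1 :=
  calc #(S ∩ H) = #((S ∩ H).image cls) := (card_image_of_injOn (hS.mono inter_subset_left)).symm
    _ ≤ #(H.image cls) := card_le_card (image_subset_image inter_subset_right)
    _ ≤ ∑ v ∈ H, #(tailClasses cls A v) + 1 := card_image_le_sum_card_tailClasses_add_one hA hH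

end Orientation

theorem sum_indicator_sub_sum_compl_indicator [Fintype V] [DecidableEq V] (S H : Finset V)
    (d : V → ℝ) :
    (∑ u ∈ S, (1 - d u) * (if u ∈ H then 1 else 0)) - ∑ v ∈ Sᶜ, d v * (if v ∈ H then 1 else 0) =
      #(S ∩ H) - ∑ v ∈ H, d v := by
  have hsplit : ∑ v ∈ H, d v = ∑ v ∈ S ∩ H, d v + ∑ v ∈ Sᶜ ∩ H, d v := by
    rw [← sum_union (disjoint_compl_right.mono inter_subset_left inter_subset_left),
      ← union_inter_distrib_right, union_compl, univ_inter]
  simp only [mul_ite, mul_one, mul_zero, sum_ite_mem, sum_sub_distrib, sum_const, nsmul_one, hsplit]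
  ring

theorem stmt3_general [Fintype V] [DecidableEq V] (G : SimpleGraph V) (ℓ : ℕ)
    (W : Fin ℓ → Set V) (hpart : ∀ v : V, ∃! i, v ∈ W i)
    (S : Finset V)
    (hagree : ∀ i, ∃! s : V, s ∈ S ∧ s ∈ W i)
    (A : V → V → Prop)
    (horient : ∀ u v : V,
      (A u v ∨ A v u) ↔ (G.Adj u v ∧ ∀ i, ¬ (u ∈ W i ∧ v ∈ W i)))
    (dhat : V → ℕ)
    (hdhat : ∀ v, dhat v = Nat.card {i : Fin ℓ // ∃ u ∈ W i, A u v}) :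
    (∀ H : Finset V, (G.induce (↑H : Set V)).Connected →
        ((S ∩ H).card : ℤ) - ∑ v ∈ H, (dhat v : ℤ) ≤ 1) ∧
      ∀ (k : ℕ) (c : Fin k) (P : Fin k → Set V), ConnKSub G k P →
        (∑ u ∈ S, ((1 : ℝ) - (dhat u : ℝ)) * (if u ∈ P c then 1 else 0)) -
            ∑ v ∈ Sᶜ, (dhat v : ℝ) * (if v ∈ P c then 1 else 0) ≤ 1 := by
  choose cls hcls huniq using hpart
  have hW : ∀ v i, v ∈ W i ↔ cls v = i := fun v i => ⟨fun h => (huniq v i h).symm, (· ▸ hcls v)⟩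
  have hA : ∀ u v, G.Adj u v → cls u ≠ cls v → A u v ∨ A v u := fun u v huv hne =>
    (horient u v).2 ⟨huv, fun i ⟨hu, hv⟩ => hne (((hW u i).1 hu).trans ((hW v i).1 hv).symm)⟩
  have hS : Set.InjOn cls S := fun s hs t ht hst =>
    (hagree (cls s)).unique ⟨hs, hcls s⟩ ⟨ht, hst ▸ hcls t⟩
  have hdhat' : ∀ v, dhat v = #(tailClasses cls A v) := fun v => by
    rw [hdhat, Nat.card_eq_fintype_card, Fintype.card_subtype]
    congr 1
    ext i
    simp [tailClasses, hW]
  have key : ∀ H : Finset V, (G.induce (↑H : Set V)).Connected →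
      ((S ∩ H).card : ℤ) - ∑ v ∈ H, (dhat v : ℤ) ≤ 1 := fun H hH => by
    simp only [hdhat', sub_le_iff_le_add']
    exact_mod_cast card_inter_le_sum_card_tailClasses_add_one hA hS hH
  refine ⟨key, fun k c P hP => ?_⟩
  rcases hP.2 c with hc | hc
  · simp [hc]
  · have := key (P c).toFinset (by rwa [Set.coe_toFinset])
    simp only [← Set.mem_toFinset (s := P c), sum_indicator_sub_sum_compl_indicator]
    exact_mod_cast this

theorem stmt3 [Fintype V] [DecidableEq V] (G : SimpleGraph V) (ℓ : ℕ)
    (W : Fin ℓ → Set V) (hpart : ∀ v : V, ∃! i, v ∈ W i)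
    (S : Finset V) (hScard : S.card = ℓ)
    (hagree : ∀ i, ∃! s : V, s ∈ S ∧ s ∈ W i)
    (A : V → V → Prop)
    (horient : ∀ u v : V,
      (A u v ∨ A v u) ↔ (G.Adj u v ∧ ∀ i, ¬ (u ∈ W i ∧ v ∈ W i)))
    (hasym : ∀ u v, A u v → ¬ A v u)
    (dhat : V → ℕ)
    (hdhat : ∀ v, dhat v = Nat.card {i : Fin ℓ // ∃ u ∈ W i, A u v}) :
    (∀ H : Finset V, (G.induce (↑H : Set V)).Connected →
        ((S ∩ H).card : ℤ) - ∑ v ∈ H, (dhat v : ℤ) ≤ 1) ∧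
      ∀ (k : ℕ) (c : Fin k) (P : Fin k → Set V), ConnKSub G k P →
        (∑ u ∈ S, ((1 : ℝ) - (dhat u : ℝ)) * (if u ∈ P c then 1 else 0)) -
            ∑ v ∈ Sᶜ, (dhat v : ℝ) * (if v ∈ P c then 1 else 0) ≤ 1 :=
  stmt3_general G ℓ W hpart S hagree A horient dhat hdhat
end

section
/- Let G be a graph, u and v non-adjacent distinct vertices, Z a minimal u,v-separator, and let U be the vertex set of the component of G − Z containing u. Consider the 2-partition W = {U, V(G) \ U} of V(G) and orient every crossing edge from U to its other endpoint. Then for every vertex w, d̂(w) = 1 if w ∈ Z and d̂(w) = 0 otherwise; hence the generalized connectivity inequality for S = {u,v} coincides with the connectivity inequality x_{u,c} + x_{v,c} − Σ_{z ∈ Z} x_{z,c} ≤ 1. -/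
/-!
Every crossing arc has its tail in `U`, so only the class `U` can contribute to `d̂(w)`, and it
does exactly when `w ∉ U` has a neighbour in `U`. Such a `w` lies in `Z`, since `U` is a component
of `G - Z`. Conversely, if `z ∈ Z`, minimality gives a `u,v`-walk avoiding `Z \ {z}`; it has to
leave `U`, and a step out of `U` lands in `Z`, hence on `z`, so `z` has a neighbour in `U`.
-/

open scoped Classical

variable {V : Type*}

/-- `Z` is a `u,v`-separator in `G`. -/
def IsSep (G : SimpleGraph V) (u v : V) (Z : Set V) : Prop :=
  Z ⊆ ({u, v} : Set V)ᶜ ∧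
    ∀ (hu : u ∈ Zᶜ) (hv : v ∈ Zᶜ),
      ¬ (G.induce Zᶜ).Reachable ⟨u, hu⟩ ⟨v, hv⟩

namespace SimpleGraph

variable (G : SimpleGraph V)

/-- The vertex set of the component of `G[s]` containing `u` (empty if `u ∉ s`). -/
def componentIn (s : Set V) (u : V) : Set V :=
  {w | ∃ (hw : w ∈ s) (hu : u ∈ s), (G.induce s).Reachable ⟨u, hu⟩ ⟨w, hw⟩}

variable {G} {s : Set V} {u t w : V}

lemma componentIn_subset : G.componentIn s u ⊆ s := fun _ ⟨hw, _⟩ ↦ hw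

lemma mem_componentIn_self (hu : u ∈ s) : u ∈ G.componentIn s u :=
  ⟨hu, hu, .refl _⟩

lemma mem_componentIn_of_adj (ht : t ∈ G.componentIn s u) (hw : w ∈ s) (htw : G.Adj t w) :
    w ∈ G.componentIn s u := by
  obtain ⟨ht, hu, hreach⟩ := ht
  exact ⟨hw, hu, hreach.trans (show (G.induce s).Adj ⟨t, ht⟩ ⟨w, hw⟩ from htw).reachable⟩

lemma notMem_of_adj_mem_componentIn (ht : t ∈ G.componentIn s u) (htw : G.Adj t w)
    (hwC : w ∉ G.componentIn s u) : w ∉ s :=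
  fun hw ↦ hwC (mem_componentIn_of_adj ht hw htw)

end SimpleGraph

open SimpleGraph

namespace IsSep

variable {G : SimpleGraph V} {u v : V} {Z : Set V}

lemma left_notMem (h : IsSep G u v Z) : u ∉ Z := fun hu ↦ h.1 hu (by simp)

lemma right_notMem (h : IsSep G u v Z) : v ∉ Z := fun hv ↦ h.1 hv (by simp)

lemma right_notMem_componentIn (h : IsSep G u v Z) : v ∉ G.componentIn Zᶜ u :=
  fun ⟨hv, hu, hreach⟩ ↦ h.2 hu hv hreach

lemma exists_adj_of_not_isSep_diff (h : IsSep G u v Z) {z : V}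
    (hmin : ¬ IsSep G u v (Z \ {z})) : ∃ t ∈ G.componentIn Zᶜ u, G.Adj t z := by
  have hsub : Z \ {z} ⊆ ({u, v} : Set V)ᶜ := Set.sdiff_subset.trans h.1
  obtain ⟨hu, hv, ⟨q⟩⟩ : ∃ (hu : u ∈ (Z \ {z})ᶜ) (hv : v ∈ (Z \ {z})ᶜ),
      (G.induce (Z \ {z})ᶜ).Reachable ⟨u, hu⟩ ⟨v, hv⟩ := by
    simpa [IsSep, hsub] using hmin
  obtain ⟨⟨⟨⟨t, _⟩, ⟨w, hw⟩⟩, htw⟩, -, ht, hwC⟩ :=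
    q.exists_boundary_dart (Subtype.val ⁻¹' G.componentIn Zᶜ u)
      (mem_componentIn_self h.left_notMem) h.right_notMem_componentIn
  have hwZ : w ∈ Z := by simpa using notMem_of_adj_mem_componentIn ht htw hwC
  obtain rfl : w = z := by simpa [hwZ] using hw
  exact ⟨t, ht, htw⟩

lemma mem_iff_exists_adj_componentIn (h : IsSep G u v Z)
    (hmin : ∀ z ∈ Z, ¬ IsSep G u v (Z \ {z})) (w : V) :
    w ∈ Z ↔ w ∉ G.componentIn Zᶜ u ∧ ∃ t ∈ G.componentIn Zᶜ u, G.Adj t w := by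
  constructor
  · intro hw
    exact ⟨fun hwC ↦ componentIn_subset hwC hw, h.exists_adj_of_not_isSep_diff (hmin w hw)⟩
  · rintro ⟨hwC, t, ht, htw⟩
    simpa using notMem_of_adj_mem_componentIn ht htw hwC

end IsSep

lemma card_classes_with_tail_eq_ite (U : Set V) (A : V → V → Prop) (hA : ∀ t w, A t w → t ∈ U)
    (w : V) :
    Nat.card {i : Fin 2 // ∃ t ∈ ![U, Uᶜ] i, A t w} = if ∃ t ∈ U, A t w then 1 else 0 := by
  have hclass : ∀ i : Fin 2, (∃ t ∈ ![U, Uᶜ] i, A t w) ↔ i = 0 ∧ ∃ t ∈ U, A t w := by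
    intro i
    fin_cases i
    · simp
    · simpa using fun t ht htw ↦ ht (hA t w htw)
  rw [Nat.card_congr (Equiv.subtypeEquivRight hclass)]
  split_ifs with hP <;> simp [hP]

theorem stmt4_general [Fintype V] [DecidableEq V] (G : SimpleGraph V) (u v : V)
    (Z : Finset V)
    (hsep : IsSep G u v (↑Z : Set V))
    (hmin : ∀ Z' ⊆ Z, Z' ≠ Z → ¬ IsSep G u v (↑Z' : Set V))
    (U : Set V)
    (hU : U = {w : V | ∃ (hw : w ∈ ((↑Z : Set V))ᶜ) (hu : u ∈ ((↑Z : Set V))ᶜ),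
      (G.induce ((↑Z : Set V))ᶜ).Reachable ⟨u, hu⟩ ⟨w, hw⟩})
    (A : V → V → Prop) (hA : ∀ a b, A a b ↔ (G.Adj a b ∧ a ∈ U ∧ b ∉ U))
    (dhat : V → ℕ)
    (hdhat : ∀ w, dhat w = Nat.card {i : Fin 2 // ∃ t ∈ (![U, Uᶜ] i), A t w}) :
    (∀ w : V, dhat w = if w ∈ Z then 1 else 0) ∧
      ∀ x : V → ℝ,
        ((1 : ℝ) - dhat u) * x u + ((1 : ℝ) - dhat v) * x v -
            ∑ w ∈ Finset.univ \ {u, v}, (dhat w : ℝ) * x w =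
          x u + x v - ∑ z ∈ Z, x z := by
  replace hU : U = G.componentIn (↑Z)ᶜ u := hU
  have hmin' : ∀ z ∈ (↑Z : Set V), ¬ IsSep G u v (↑Z \ {z}) := fun z hz ↦ by
    simpa using hmin (Z.erase z) (Z.erase_subset z) (by simpa using hz)
  have hdhat' : ∀ w, dhat w = if w ∈ Z then 1 else 0 := fun w ↦ by
    have hfrontier : (∃ t ∈ U, A t w) ↔ w ∈ Z := by
      rw [← Finset.mem_coe, hsep.mem_iff_exists_adj_componentIn hmin' w, ← hU]
      simp only [hA]
      exact ⟨fun ⟨t, ht, htw, _, hw⟩ ↦ ⟨hw, t, ht, htw⟩, fun ⟨hw, t, ht, htw⟩ ↦ ⟨t, ht, htw, ht, hw⟩⟩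
    rw [hdhat, card_classes_with_tail_eq_ite U A (fun t w htw ↦ ((hA t w).1 htw).2.1)]
    simp only [hfrontier]
  refine ⟨hdhat', fun x ↦ ?_⟩
  have huZ : u ∉ Z := hsep.left_notMem
  have hvZ : v ∉ Z := hsep.right_notMem
  have hsum : ∑ w ∈ Finset.univ \ {u, v}, (dhat w : ℝ) * x w = ∑ z ∈ Z, x z := by
    simp only [hdhat', Nat.cast_ite, Nat.cast_one, Nat.cast_zero, ite_mul, one_mul, zero_mul,
      Finset.sum_ite_mem]
    rw [Finset.inter_eq_right.2 fun w hw ↦ by simpa using hsep.1 hw]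
  rw [hsum, hdhat' u, hdhat' v, if_neg huZ, if_neg hvZ]
  push_cast
  ring

theorem stmt4 [Fintype V] [DecidableEq V] (G : SimpleGraph V) (u v : V)
    (hne : u ≠ v) (hadj : ¬ G.Adj u v) (Z : Finset V)
    (hsep : IsSep G u v (↑Z : Set V))
    (hmin : ∀ Z' ⊆ Z, Z' ≠ Z → ¬ IsSep G u v (↑Z' : Set V))
    (U : Set V)
    (hU : U = {w : V | ∃ (hw : w ∈ ((↑Z : Set V))ᶜ) (hu : u ∈ ((↑Z : Set V))ᶜ),
      (G.induce ((↑Z : Set V))ᶜ).Reachable ⟨u, hu⟩ ⟨w, hw⟩})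
    (A : V → V → Prop) (hA : ∀ a b, A a b ↔ (G.Adj a b ∧ a ∈ U ∧ b ∉ U))
    (dhat : V → ℕ)
    (hdhat : ∀ w, dhat w = Nat.card {i : Fin 2 // ∃ t ∈ (![U, Uᶜ] i), A t w}) :
    (∀ w : V, dhat w = if w ∈ Z then 1 else 0) ∧
      ∀ x : V → ℝ,
        ((1 : ℝ) - dhat u) * x u + ((1 : ℝ) - dhat v) * x v -
            ∑ w ∈ Finset.univ \ {u, v}, (dhat w : ℝ) * x w =
          x u + x v - ∑ z ∈ Z, x z :=
  stmt4_general G u v Z hsep hmin U hU A hA dhat hdhat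
end

section
/- Let G be a graph with n vertices, let k ≥ 1, let C ⊆ [k] be nonempty, let S ⊆ V(G) be a stable set, let Z ⊆ V(G) \ S be a multiway cut of S in G, and set β = max(|S| − |C|, 0). Then for every connected k-subpartition {V_1,…,V_k} of G, Σ_{c ∈ C} |V_c ∩ S| − β · Σ_{c ∈ C} |V_c ∩ Z| ≤ |C|. -/
/-! A part of the subpartition that misses `Z` is a connected subgraph of `G − Z`, so it meets
`S` in at most one vertex; hence if no part indexed by `C` meets `Z`, the first sum is at most
`|C|`. Otherwise the second sum is at least one, and since the parts are disjoint the first sum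
is at most `|S| ≤ |C| + β`. -/

variable {V : Type*}

/-- `S` is a stable (independent) set of `G`. -/
def IsStable (G : SimpleGraph V) (S : Set V) : Prop :=
  ∀ u ∈ S, ∀ v ∈ S, ¬ G.Adj u v

/-- `Z` is a multiway cut of `S` in `G`: `Z` avoids `S` and each component of
`G − Z` contains at most one vertex of `S`. -/
def IsMultiwayCut (G : SimpleGraph V) (S Z : Set V) : Prop :=
  Z ⊆ Sᶜ ∧
    ∀ u ∈ S, ∀ v ∈ S, u ≠ v →
      ∀ (hu : u ∈ Zᶜ) (hv : v ∈ Zᶜ),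
        ¬ (G.induce Zᶜ).Reachable ⟨u, hu⟩ ⟨v, hv⟩

open Function

theorem Set.sum_ncard_inter_le_ncard {ι α : Type*} {P : ι → Set α}
    (hP : Pairwise (Disjoint on P)) (C : Finset ι) {S : Set α} (hS : S.Finite) :
    ∑ c ∈ C, (P c ∩ S).ncard ≤ S.ncard := by
  have hdisj : (C : Set ι).PairwiseDisjoint fun c => P c ∩ S := fun c _ d _ hcd =>
    (hP hcd).mono inter_subset_left inter_subset_left
  calc ∑ c ∈ C, (P c ∩ S).ncard
      = (⋃ c ∈ (C : Set ι), P c ∩ S).ncard := by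
        rw [C.finite_toSet.ncard_biUnion (fun _ _ => hS.inter_of_right _) hdisj,
          finsum_mem_coe_finset]
    _ ≤ S.ncard := ncard_le_ncard (iUnion₂_subset fun _ _ => inter_subset_right) hS

theorem ConnKSub.preconnected {G : SimpleGraph V} {k : ℕ} {P : Fin k → Set V}
    (hP : ConnKSub G k P) (i : Fin k) : (G.induce (P i)).Preconnected := by
  rcases hP.2 i with hempty | hconn
  · rw [hempty]
    exact fun u => u.2.elim
  · exact hconn.preconnected

theorem IsMultiwayCut.ncard_inter_le_one {G : SimpleGraph V} {S Z A : Set V}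
    (hZ : IsMultiwayCut G S Z) (hA : (G.induce A).Preconnected) (hAZ : Disjoint A Z) :
    (A ∩ S).ncard ≤ 1 := by
  obtain hfin | hinf := (A ∩ S).finite_or_infinite
  · rw [Set.ncard_le_one hfin]
    intro u hu v hv
    by_contra huv
    have hAZc : A ⊆ Zᶜ := hAZ.subset_compl_right
    exact hZ.2 u hu.2 v hv.2 huv (hAZc hu.1) (hAZc hv.1)
      ((hA ⟨u, hu.1⟩ ⟨v, hv.1⟩).map (G.induceHomOfLE hAZc).toHom)
  · simp [hinf.ncard]

theorem stmt5_general [Fintype V] (G : SimpleGraph V) (k : ℕ)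
    (C : Finset (Fin k)) (S Z : Set V)
    (hZ : IsMultiwayCut G S Z)
    (β : ℤ) (hβ : β = max ((S.ncard : ℤ) - (C.card : ℤ)) 0)
    (P : Fin k → Set V) (hP : ConnKSub G k P) :
    (∑ c ∈ C, ((P c ∩ S).ncard : ℤ)) - β * ∑ c ∈ C, ((P c ∩ Z).ncard : ℤ) ≤
      (C.card : ℤ) := by
  have hβS : (S.ncard : ℤ) - C.card ≤ β := hβ ▸ le_max_left _ _
  have hβ0 : 0 ≤ β := hβ ▸ le_max_right _ _
  by_cases hmiss : ∀ c ∈ C, Disjoint (P c) Z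
  · have hSsum : ∑ c ∈ C, (P c ∩ S).ncard ≤ C.card := by
      simpa using Finset.sum_le_card_nsmul C _ 1
        fun c hc => hZ.ncard_inter_le_one (hP.preconnected c) (hmiss c hc)
    have hZsum : ∑ c ∈ C, ((P c ∩ Z).ncard : ℤ) = 0 := Finset.sum_eq_zero fun c hc => by
      rw [Set.disjoint_iff_inter_eq_empty.mp (hmiss c hc), Set.ncard_empty, Nat.cast_zero]
    rw [hZsum]
    linarith
  · push Not at hmiss
    obtain ⟨c₀, hc₀, hmeet⟩ := hmiss
    have hZsum : (1 : ℤ) ≤ ∑ c ∈ C, ((P c ∩ Z).ncard : ℤ) :=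
      calc (1 : ℤ) ≤ (P c₀ ∩ Z).ncard := by
            exact_mod_cast (Set.ncard_pos).mpr (Set.not_disjoint_iff_nonempty_inter.mp hmeet)
        _ ≤ ∑ c ∈ C, ((P c ∩ Z).ncard : ℤ) :=
            Finset.single_le_sum (fun c _ => Int.natCast_nonneg _) hc₀
    have hSsum : ∑ c ∈ C, ((P c ∩ S).ncard : ℤ) ≤ S.ncard := by
      exact_mod_cast Set.sum_ncard_inter_le_ncard hP.1 C S.toFinite
    linarith [mul_le_mul_of_nonneg_left hZsum hβ0]

theorem stmt5 [Fintype V] (G : SimpleGraph V) (k : ℕ) (hk : 1 ≤ k)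
    (C : Finset (Fin k)) (hC : C.Nonempty) (S Z : Set V)
    (hS : IsStable G S) (hZ : IsMultiwayCut G S Z)
    (β : ℤ) (hβ : β = max ((S.ncard : ℤ) - (C.card : ℤ)) 0)
    (P : Fin k → Set V) (hP : ConnKSub G k P) :
    (∑ c ∈ C, ((P c ∩ S).ncard : ℤ)) - β * ∑ c ∈ C, ((P c ∩ Z).ncard : ℤ) ≤
      (C.card : ℤ) :=
  stmt5_general G k C S Z hZ β hβ P hP
end

section
/- Let G be a graph, k ≥ 1, and let x ∈ {0,1}^{nk}. Then x is the incidence vector of a connected k-subpartition of G if and only if x satisfies: (i) Σ_{c∈[k]} x_{v,c} ≤ 1 for all vertices v, and (ii) x_{u,c} + x_{v,c} − Σ_{z∈Z} x_{z,c} ≤ 1 for all non-adjacent pairs {u,v}, all minimal u,v-separators Z, and all classes c. -/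
/-!
Write `P c = {v | x v c = 1}`, so that `x` is the incidence vector of `P`. Inequality (i) says
exactly that the classes `P c` are pairwise disjoint, and inequality (ii) for class `c` says that
every minimal `u,v`-separator meets `P c` whenever `u, v ∈ P c`. A separator of two vertices of a
connected set must meet it. Conversely, if `u, v ∈ S` lie in different components of `G[S]`, then
`Sᶜ` is a `u,v`-separator; on a finite vertex set it contains a minimal one, which misses `S`.
-/

open scoped Classical

variable {V : Type*}

open SimpleGraph Finset Function

def IsMinSep (G : SimpleGraph V) (u v : V) (Z : Finset V) : Prop :=
  IsSep G u v (↑Z : Set V) ∧ ∀ Z' ⊆ Z, Z' ≠ Z → ¬ IsSep G u v (↑Z' : Set V)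

namespace IsSep

variable {G : SimpleGraph V} {u v : V}

lemma exists_isMinSep_subset {Z : Finset V} (hZ : IsSep G u v ↑Z) :
    ∃ W ⊆ Z, IsMinSep G u v W := by
  obtain ⟨W, hWZ, hW, hWmin⟩ :=
    exists_minimal_le_of_wellFoundedLT (fun W : Finset V => IsSep G u v ↑W) Z hZ
  exact ⟨W, hWZ, hW, fun W' hW'W hne hW' => hne (le_antisymm hW'W (hWmin hW' hW'W))⟩

lemma inter_nonempty_of_reachable {Z S : Set V} (hZ : IsSep G u v Z) (hu : u ∈ S) (hv : v ∈ S)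
    (huv : (G.induce S).Reachable ⟨u, hu⟩ ⟨v, hv⟩) : (Z ∩ S).Nonempty := by
  by_contra h
  have hSZ : S ⊆ Zᶜ := fun w hw hwZ => h ⟨w, hwZ, hw⟩
  exact hZ.2 (hSZ hu) (hSZ hv) (huv.map (G.induceHomOfLE hSZ).toHom)

end IsSep

lemma isSep_compl_of_not_reachable {G : SimpleGraph V} {S : Set V} {u v : V} (hu : u ∈ S)
    (hv : v ∈ S) (huv : ¬ (G.induce S).Reachable ⟨u, hu⟩ ⟨v, hv⟩) : IsSep G u v Sᶜ := by
  refine ⟨?_, fun _ _ h => huv (h.map (G.induceHomOfLE (compl_compl S).le).toHom)⟩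
  rintro w hwS (rfl | rfl) <;> contradiction

theorem induce_preconnected_iff_forall_isMinSep [Finite V] {G : SimpleGraph V} {S : Set V} :
    (G.induce S).Preconnected ↔ ∀ u v, u ≠ v → ¬ G.Adj u v → ∀ Z : Finset V,
      IsMinSep G u v Z → u ∈ S → v ∈ S → (↑Z ∩ S).Nonempty := by
  refine ⟨fun hS u v _ _ Z hZ hu hv => hZ.1.inter_nonempty_of_reachable hu hv (hS _ _), ?_⟩
  rintro h ⟨u, hu⟩ ⟨v, hv⟩
  by_contra huv
  have hne : u ≠ v := by rintro rfl; exact huv .rfl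
  have hadj : ¬ G.Adj u v := fun hadj => huv (Adj.reachable (G := G.induce S) hadj)
  have hsep : IsSep G u v ↑(Sᶜ.toFinite.toFinset) := by
    rw [Set.Finite.coe_toFinset]
    exact isSep_compl_of_not_reachable hu hv huv
  obtain ⟨Z, hZS, hZ⟩ := hsep.exists_isMinSep_subset
  obtain ⟨z, hzZ, hzS⟩ := h u v hne hadj Z hZ hu hv
  simpa [hzS] using hZS hzZ

lemma induce_preconnected_iff_eq_empty_or_connected {G : SimpleGraph V} {S : Set V} :
    (G.induce S).Preconnected ↔ S = ∅ ∨ (G.induce S).Connected := by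
  rw [connected_iff]
  rcases S.eq_empty_or_nonempty with rfl | hS
  · exact iff_of_true (fun u => u.2.elim) (.inl rfl)
  · simp [hS.ne_empty, hS.to_subtype]

lemma sum_ite_mem_le_one_iff_pairwise_disjoint {ι : Type*} [Fintype ι] (P : ι → Set V) :
    (∀ v, ∑ c, (if v ∈ P c then 1 else 0 : ℝ) ≤ 1) ↔ Pairwise (Disjoint on P) := by
  simp only [sum_boole, Nat.cast_le_one, card_le_one, mem_filter, mem_univ, true_and]
  refine ⟨fun h i j hij => Set.disjoint_left.2 fun v hi hj => hij (h v i hi j hj), ?_⟩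
  intro h v i hi j hj
  by_contra hij
  exact Set.disjoint_left.1 (h hij) hi hj

lemma ite_add_ite_sub_sum_le_one_iff (S : Set V) (u v : V) (Z : Finset V) :
    (if u ∈ S then 1 else 0 : ℝ) + (if v ∈ S then 1 else 0) - ∑ z ∈ Z, (if z ∈ S then 1 else 0)
      ≤ 1 ↔ (u ∈ S → v ∈ S → (↑Z ∩ S).Nonempty) := by
  have hcard : (↑Z ∩ S).Nonempty ↔ 1 ≤ #(Z.filter (· ∈ S)) := by
    simp [one_le_card, filter_nonempty_iff, Set.Nonempty]
  rw [sum_boole, hcard]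
  by_cases hu : u ∈ S <;> by_cases hv : v ∈ S <;> simp [hu, hv]
  linarith [(#(Z.filter (· ∈ S))).cast_nonneg (α := ℝ)]

lemma incidence_injective {ι : Type*} :
    Injective fun (P : ι → Set V) (v : V) (c : ι) => if v ∈ P c then (1 : ℝ) else 0 := by
  intro P Q h
  funext c
  ext v
  have := congr_fun (congr_fun h v) c
  by_cases hP : v ∈ P c <;> by_cases hQ : v ∈ Q c <;> simp_all

theorem stmt13_general [Fintype V] (G : SimpleGraph V) (k : ℕ)
    (x : V → Fin k → ℝ) (h01 : ∀ v c, x v c = 0 ∨ x v c = 1) :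
    (∃ P : Fin k → Set V, ConnKSub G k P ∧
        x = fun v c => if v ∈ P c then 1 else 0) ↔
      ((∀ v : V, ∑ c : Fin k, x v c ≤ 1) ∧
        ∀ u v : V, u ≠ v → ¬ G.Adj u v → ∀ Z : Finset V,
          (IsSep G u v (↑Z : Set V) ∧
            ∀ Z' ⊆ Z, Z' ≠ Z → ¬ IsSep G u v (↑Z' : Set V)) →
          ∀ c : Fin k, x u c + x v c - ∑ z ∈ Z, x z c ≤ 1) := by
  obtain ⟨P, rfl⟩ : ∃ P : Fin k → Set V, x = fun v c => if v ∈ P c then 1 else 0 :=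
    ⟨fun c => {v | x v c = 1}, by funext v c; rcases h01 v c with h | h <;> simp [h]⟩
  have hP : (∃ Q, ConnKSub G k Q ∧ (fun v c => if v ∈ P c then (1 : ℝ) else 0) =
      fun v c => if v ∈ Q c then 1 else 0) ↔ ConnKSub G k P :=
    ⟨fun ⟨_, hQ, hPQ⟩ => incidence_injective hPQ ▸ hQ, fun hP => ⟨P, hP, rfl⟩⟩
  beta_reduce
  rw [hP, ConnKSub, sum_ite_mem_le_one_iff_pairwise_disjoint]
  simp only [ite_add_ite_sub_sum_le_one_iff, ← induce_preconnected_iff_eq_empty_or_connected,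
    induce_preconnected_iff_forall_isMinSep]
  exact and_congr Iff.rfl ⟨fun h u v huv hadj Z hZ c => h c u v huv hadj Z hZ,
    fun h c u v huv hadj Z hZ => h u v huv hadj Z hZ c⟩

theorem stmt13 [Fintype V] [DecidableEq V] (G : SimpleGraph V) (k : ℕ)
    (x : V → Fin k → ℝ) (h01 : ∀ v c, x v c = 0 ∨ x v c = 1) :
    (∃ P : Fin k → Set V, ConnKSub G k P ∧
        x = fun v c => if v ∈ P c then 1 else 0) ↔
      ((∀ v : V, ∑ c : Fin k, x v c ≤ 1) ∧
        ∀ u v : V, u ≠ v → ¬ G.Adj u v → ∀ Z : Finset V,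
          (IsSep G u v (↑Z : Set V) ∧
            ∀ Z' ⊆ Z, Z' ≠ Z → ¬ IsSep G u v (↑Z' : Set V)) →
          ∀ c : Fin k, x u c + x v c - ∑ z ∈ Z, x z c ≤ 1) :=
  stmt13_general G k x h01
end

section
/- Let G be a graph, C, {u_c,v_c}_{c∈C}, Z, pivots and γ as in the definition of the pairing inequality, and let {V_i}_{i∈[k]} be a conforming connected k-subpartition of G with respect to these data. Then the incidence vector of {V_i} satisfies the pairing inequality Σ_{c∈C} ( [u_c ∈ V_c] + [v_c ∈ V_c] − Σ_{z∈Z} γ_{z,c}·[z ∈ V_c] ) = |C| with equality. -/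
open scoped Classical

variable {V : Type*}

/-!
Say that `b` hosts `c ≠ b` when `P b` contains the pair `{uu c, vv c}`. The parts are disjoint,
so `c` has at most one host, and none when `P c` meets its own pair. Going through the four
cases of conformity, the term of `c` in the pairing sum is
`1 + #(indices hosted by c) - #(hosts of c)`; summed over `C`, both counts count the hosting
relation on `C`, so they cancel and the sum is `#C`.
-/

open Finset Function

variable {ι : Type*}

theorem Set.ncard_inter_pair {s : Set V} {u v : V} (huv : u ≠ v) :
    ((s ∩ {u, v}).ncard : ℤ) = (if u ∈ s then 1 else 0) + (if v ∈ s then 1 else 0) := by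
  by_cases hu : u ∈ s <;> by_cases hv : v ∈ s <;>
    simp [hu, hv, Set.inter_insert_of_mem, Set.inter_insert_of_notMem, Set.ncard_pair huv]

theorem sum_eq_card_of_eq_one_add_card_sub_card (C : Finset ι) (r : ι → ι → Prop)
    [DecidableRel r] (f : ι → ℤ)
    (hf : ∀ c ∈ C, f c = 1 + #{b ∈ C | r c b} - #{b ∈ C | r b c}) :
    ∑ c ∈ C, f c = #C := by
  have hdouble := sum_card_bipartiteAbove_eq_sum_card_bipartiteBelow (s := C) (t := C) (r := r)
  rw [sum_congr rfl hf, sum_sub_distrib, sum_add_distrib]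
  simp only [bipartiteAbove, bipartiteBelow] at hdouble
  rw [← Nat.cast_sum, ← Nat.cast_sum, hdouble]
  simp

theorem Pairwise.eq_of_mem_of_mem {P : ι → Set V} (hP : Pairwise (Disjoint on P)) {x : V}
    {i j : ι} (hi : x ∈ P i) (hj : x ∈ P j) : i = j :=
  hP.eq (Set.not_disjoint_iff.mpr ⟨x, hi, hj⟩)

section Hosting

variable (P : ι → Set V) (uu vv : ι → V)

def Hosts (b c : ι) : Prop := c ≠ b ∧ ({uu c, vv c} : Set V) ⊆ P b

def Conforming (C : Finset ι) (Z : Finset V) (γ : V → ι → ℕ) (c : ι) : Prop :=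
  ((P c ∩ {uu c, vv c}).ncard = 0 ∧ (∀ z ∈ Z, z ∈ P c → γ z c = 0) ∧
      ∃ b ∈ C, b ≠ c ∧ ({uu c, vv c, uu b, vv b} : Set V) ⊆ P b) ∨
    ((P c ∩ {uu c, vv c}).ncard = 1 ∧ (∀ z ∈ Z, z ∈ P c → γ z c = 0) ∧
      ∀ b ∈ C, b ≠ c → ¬ (({uu b, vv b} : Set V) ⊆ P c)) ∨
    ((P c ∩ {uu c, vv c}).ncard = 2 ∧
      (∃! z : V, z ∈ Z ∧ z ∈ P c ∧ γ z c = 1) ∧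
      ∀ b ∈ C, b ≠ c → ¬ (({uu b, vv b} : Set V) ⊆ P c)) ∨
    ((P c ∩ {uu c, vv c}).ncard = 2 ∧ (∀ z ∈ Z, z ∈ P c → γ z c = 0) ∧
      ∃! b : ι, b ∈ C ∧ b ≠ c ∧ ({uu b, vv b} : Set V) ⊆ P c)

noncomputable def pairingTerm (Z : Finset V) (γ : V → ι → ℕ) (c : ι) : ℤ :=
  (if uu c ∈ P c then (1 : ℤ) else 0) + (if vv c ∈ P c then 1 else 0) -
    ∑ z ∈ Z, (γ z c : ℤ) * (if z ∈ P c then 1 else 0)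

variable {P uu vv} {C : Finset ι} {Z : Finset V} {γ : V → ι → ℕ} {b c : ι}

theorem Hosts.inter_eq_empty (hP : Pairwise (Disjoint on P)) (h : Hosts P uu vv b c) :
    P c ∩ {uu c, vv c} = ∅ :=
  Set.disjoint_iff_inter_eq_empty.mp ((hP h.1).mono_right h.2)

theorem Hosts.unique (hP : Pairwise (Disjoint on P)) {b' : ι} (h : Hosts P uu vv b c)
    (h' : Hosts P uu vv b' c) : b = b' :=
  hP.eq_of_mem_of_mem (h.2 (Set.mem_insert _ _)) (h'.2 (Set.mem_insert _ _))

theorem Hosts.subset_self (hP : Pairwise (Disjoint on P))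
    (hconf : ∀ c ∈ C, Conforming P uu vv C Z γ c) (hc : c ∈ C) (h : Hosts P uu vv b c) :
    ({uu b, vv b} : Set V) ⊆ P b := by
  have hcard : (P c ∩ {uu c, vv c}).ncard = 0 := by simp [h.inter_eq_empty hP]
  -- so `c` is in the first case of conformity, and its witness `d` shares `uu c` with `P b`
  rcases hconf c hc with ⟨-, -, d, -, -, hd⟩ | ⟨h1, -⟩ | ⟨h2, -⟩ | ⟨h2, -⟩
  · obtain rfl : d = b :=
      hP.eq_of_mem_of_mem (hd (Set.mem_insert _ _)) (h.2 (Set.mem_insert _ _))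
    exact fun x hx => hd (by simp only [Set.mem_insert_iff] at hx ⊢; tauto)
  all_goals omega

theorem card_hosts_le_one (hP : Pairwise (Disjoint on P)) :
    #{b ∈ C | Hosts P uu vv b c} ≤ 1 :=
  card_le_one.mpr fun _ hb _ hb' => (mem_filter.mp hb).2.unique hP (mem_filter.mp hb').2

theorem card_hosts_eq_zero (hP : Pairwise (Disjoint on P))
    (hne : (P c ∩ {uu c, vv c}).ncard ≠ 0) : #{b ∈ C | Hosts P uu vv b c} = 0 := by
  refine card_eq_zero.mpr (filter_eq_empty_iff.mpr fun b _ h => hne ?_)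
  simp [h.inter_eq_empty hP]

theorem card_guests_eq_zero (hno : ∀ b ∈ C, b ≠ c → ¬ (({uu b, vv b} : Set V) ⊆ P c)) :
    #{b ∈ C | Hosts P uu vv c b} = 0 :=
  card_eq_zero.mpr (filter_eq_empty_iff.mpr fun b hb h => hno b hb h.1 h.2)

theorem sum_gamma_eq_zero (hγ : ∀ z ∈ Z, z ∈ P c → γ z c = 0) :
    ∑ z ∈ Z, (γ z c : ℤ) * (if z ∈ P c then 1 else 0) = 0 :=
  sum_eq_zero fun z hz => by by_cases hzP : z ∈ P c <;> simp [hzP, hγ z hz]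

theorem sum_gamma_eq_one (hγ : ∀ z ∈ Z, γ z c ≤ 1) (hone : ∃! z, z ∈ Z ∧ z ∈ P c ∧ γ z c = 1) :
    ∑ z ∈ Z, (γ z c : ℤ) * (if z ∈ P c then 1 else 0) = 1 := by
  obtain ⟨z₀, ⟨hz₀, hz₀P, hz₀γ⟩, huniq⟩ := hone
  rw [sum_eq_single_of_mem z₀ hz₀ fun z hz hne => ?_]
  · simp [hz₀P, hz₀γ]
  by_cases hzP : z ∈ P c
  · obtain h | h := Nat.le_one_iff_eq_zero_or_eq_one.mp (hγ z hz)
    · simp [h]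
    · exact absurd (huniq z ⟨hz, hzP, h⟩) hne
  · simp [hzP]

theorem pairingTerm_eq (hP : Pairwise (Disjoint on P)) (huv : uu c ≠ vv c)
    (hγ : ∀ z ∈ Z, γ z c ≤ 1) (hconf : ∀ c ∈ C, Conforming P uu vv C Z γ c) (hc : c ∈ C) :
    pairingTerm P uu vv Z γ c =
      1 + #{b ∈ C | Hosts P uu vv c b} - #{b ∈ C | Hosts P uu vv b c} := by
  rw [pairingTerm, ← Set.ncard_inter_pair huv]
  rcases hconf c hc with ⟨h0, hγ0, b, hb, hbc, hsub⟩ | ⟨h1, hγ0, hno⟩ | ⟨h2, hone, hno⟩ |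
      ⟨h2, hγ0, hex⟩
  · have hguests : #{b ∈ C | Hosts P uu vv c b} = 0 := by
      refine card_eq_zero.mpr (filter_eq_empty_iff.mpr fun d hd h => ?_)
      have hempty : P c ∩ {uu c, vv c} = ∅ :=
        (Set.ncard_eq_zero ((Set.toFinite _).inter_of_right _)).mp h0
      exact hempty.subset ⟨h.subset_self hP hconf hd (Set.mem_insert _ _), Set.mem_insert _ _⟩
    have hhosts : #{b ∈ C | Hosts P uu vv b c} = 1 := by
      refine le_antisymm (card_hosts_le_one hP)
        (card_pos.mpr ⟨b, mem_filter.mpr ⟨hb, hbc.symm, ?_⟩⟩)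
      exact fun x hx => hsub (by simp only [Set.mem_insert_iff] at hx ⊢; tauto)
    rw [h0, sum_gamma_eq_zero hγ0, hguests, hhosts]; norm_num
  · rw [h1, sum_gamma_eq_zero hγ0, card_guests_eq_zero hno, card_hosts_eq_zero hP (by omega)]
    norm_num
  · rw [h2, sum_gamma_eq_one hγ hone, card_guests_eq_zero hno, card_hosts_eq_zero hP (by omega)]
    norm_num
  · have hguests : #{b ∈ C | Hosts P uu vv c b} = 1 := by
      obtain ⟨b, hb, huniq⟩ := hex
      refine card_eq_one.mpr ⟨b, ext fun d => ?_⟩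
      rw [mem_filter, mem_singleton]
      exact ⟨huniq d, by rintro rfl; exact hb⟩
    rw [h2, sum_gamma_eq_zero hγ0, hguests, card_hosts_eq_zero hP (by omega)]
    norm_num

end Hosting

theorem stmt15_general (G : SimpleGraph V) (k : ℕ)
    (C : Finset (Fin k)) (uu vv : Fin k → V)
    (hdel : ∀ c ∈ C, uu c ≠ vv c ∧ ¬ G.Adj (uu c) (vv c))
    (Z : Finset V)
    (pivot : (c : Fin k) → G.Walk (uu c) (vv c) → V)
    (γ : V → Fin k → ℕ)
    (hγ : ∀ z ∈ Z, ∀ c ∈ C, γ z c =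
      if ((∃ b ∈ C, b ≠ c ∧
            ∀ p : G.Walk (uu c) (vv c), p.IsPath → pivot c p = z →
              uu b ∈ p.support ∧ vv b ∈ p.support) ∨
          ¬ ∃ p : G.Walk (uu c) (vv c), p.IsPath ∧ pivot c p = z)
      then 0 else 1)
    (P : Fin k → Set V) (hP : ConnKSub G k P)
    -- `P` is conforming with respect to these data:
    (hconf : ∀ c ∈ C,
      ((P c ∩ {uu c, vv c}).ncard = 0 ∧ (∀ z ∈ Z, z ∈ P c → γ z c = 0) ∧
          ∃ b ∈ C, b ≠ c ∧ ({uu c, vv c, uu b, vv b} : Set V) ⊆ P b) ∨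
        ((P c ∩ {uu c, vv c}).ncard = 1 ∧ (∀ z ∈ Z, z ∈ P c → γ z c = 0) ∧
          ∀ b ∈ C, b ≠ c → ¬ (({uu b, vv b} : Set V) ⊆ P c)) ∨
        ((P c ∩ {uu c, vv c}).ncard = 2 ∧
          (∃! z : V, z ∈ Z ∧ z ∈ P c ∧ γ z c = 1) ∧
          ∀ b ∈ C, b ≠ c → ¬ (({uu b, vv b} : Set V) ⊆ P c)) ∨
        ((P c ∩ {uu c, vv c}).ncard = 2 ∧ (∀ z ∈ Z, z ∈ P c → γ z c = 0) ∧
          ∃! b : Fin k, b ∈ C ∧ b ≠ c ∧ ({uu b, vv b} : Set V) ⊆ P c)) :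
    ∑ c ∈ C,
        ((if uu c ∈ P c then (1 : ℤ) else 0) + (if vv c ∈ P c then 1 else 0) -
          ∑ z ∈ Z, (γ z c : ℤ) * (if z ∈ P c then 1 else 0)) =
      (C.card : ℤ) := by
  have hdisj : Pairwise (Disjoint on P) := fun i j => hP.1 i j
  have hγ_le_one : ∀ c ∈ C, ∀ z ∈ Z, γ z c ≤ 1 := fun c hc z hz => by
    rw [hγ z hz c hc]
    split <;> simp
  exact sum_eq_card_of_eq_one_add_card_sub_card C (Hosts P uu vv) (pairingTerm P uu vv Z γ)
    fun c hc => pairingTerm_eq hdisj (hdel c hc).1 (hγ_le_one c hc) hconf hc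

theorem stmt15 [Fintype V] [DecidableEq V] (G : SimpleGraph V) (k : ℕ)
    (C : Finset (Fin k)) (uu vv : Fin k → V)
    (hdel : ∀ c ∈ C, uu c ≠ vv c ∧ ¬ G.Adj (uu c) (vv c))
    (Z : Finset V) (hZdel : ∀ c ∈ C, uu c ∉ Z ∧ vv c ∉ Z)
    (hZsep : ∀ c ∈ C, IsSep G (uu c) (vv c) (↑Z : Set V))
    (pivot : (c : Fin k) → G.Walk (uu c) (vv c) → V)
    (hpivot : ∀ c ∈ C, ∀ p : G.Walk (uu c) (vv c), p.IsPath →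
      pivot c p ∈ p.support ∧ pivot c p ∈ Z)
    (γ : V → Fin k → ℕ)
    (hγ : ∀ z ∈ Z, ∀ c ∈ C, γ z c =
      if ((∃ b ∈ C, b ≠ c ∧
            ∀ p : G.Walk (uu c) (vv c), p.IsPath → pivot c p = z →
              uu b ∈ p.support ∧ vv b ∈ p.support) ∨
          ¬ ∃ p : G.Walk (uu c) (vv c), p.IsPath ∧ pivot c p = z)
      then 0 else 1)
    (P : Fin k → Set V) (hP : ConnKSub G k P)
    -- `P` is conforming with respect to these data:
    (hconf : ∀ c ∈ C,
      ((P c ∩ {uu c, vv c}).ncard = 0 ∧ (∀ z ∈ Z, z ∈ P c → γ z c = 0) ∧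
          ∃ b ∈ C, b ≠ c ∧ ({uu c, vv c, uu b, vv b} : Set V) ⊆ P b) ∨
        ((P c ∩ {uu c, vv c}).ncard = 1 ∧ (∀ z ∈ Z, z ∈ P c → γ z c = 0) ∧
          ∀ b ∈ C, b ≠ c → ¬ (({uu b, vv b} : Set V) ⊆ P c)) ∨
        ((P c ∩ {uu c, vv c}).ncard = 2 ∧
          (∃! z : V, z ∈ Z ∧ z ∈ P c ∧ γ z c = 1) ∧
          ∀ b ∈ C, b ≠ c → ¬ (({uu b, vv b} : Set V) ⊆ P c)) ∨
        ((P c ∩ {uu c, vv c}).ncard = 2 ∧ (∀ z ∈ Z, z ∈ P c → γ z c = 0) ∧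
          ∃! b : Fin k, b ∈ C ∧ b ≠ c ∧ ({uu b, vv b} : Set V) ⊆ P c)) :
    ∑ c ∈ C,
        ((if uu c ∈ P c then (1 : ℤ) else 0) + (if vv c ∈ P c then 1 else 0) -
          ∑ z ∈ Z, (γ z c : ℤ) * (if z ∈ P c then 1 else 0)) =
      (C.card : ℤ) :=
  stmt15_general G k C uu vv hdel Z pivot γ hγ P hP hconf
end
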